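/- For the bent helicoid F with parameter a, writing z = x + iy, the conformal factor satisfies |F_x| = |F_y| = cosh(y)cosh(ay) - sin(ax)sinh(y), i.e., the squared norm of the partial derivative of F with respect to y at (x,y) equals (cosh(y)cosh(ay) - sin(ax)sinh(y))². -/

import Mathlib

open Complex

noncomputable def circC (z : ℂ) : Fin 3 → ℂ := ![Complex.cos z, Complex.sin z, 0]

noncomputable def circC' (z : ℂ) : Fin 3 → ℂ := ![-Complex.sin z, Complex.cos z, 0]

noncomputable def spinN (a : ℝ) (z : ℂ) : Fin 3 → ℂ :=
  Complex.cos ((a : ℂ) * z) • ![-Complex.cos z, -Complex.sin z, 0]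
    + Complex.sin ((a : ℂ) * z) • ![(0 : ℂ), 0, 1]

/-- The bent helicoid as a map `ℝ² → ℝ³` via the Björling formula. -/
noncomputable def bentF (a : ℝ) (x y : ℝ) : Fin 3 → ℝ :=
  fun i => ((circC (x + y * Complex.I) - Complex.I •
    ∫ t in (0:ℝ)..1, (x + y * Complex.I) •
      crossProduct (spinN a ((t : ℂ) * (x + y * Complex.I)))
        (circC' ((t : ℂ) * (x + y * Complex.I)))) i).re

set_option linter.unnecessarySeqFocus false
set_option linter.unreachableTactic false
set_option linter.unusedTactic false
set_option linter.unusedVariables false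

noncomputable def Hvec (a : ℝ) (w : ℂ) : Fin 3 → ℂ :=
  ![-(Complex.sin ((a:ℂ)*w) * Complex.cos w), -(Complex.sin ((a:ℂ)*w) * Complex.sin w),
    -Complex.cos ((a:ℂ)*w)]

lemma cross_eq (a : ℝ) (w : ℂ) : crossProduct (spinN a w) (circC' w) = Hvec a w := by
  funext i
  fin_cases i <;>
    simp [cross_apply, spinN, circC', Hvec] <;>
    ring_nf <;>
    rw [show ∀ u : ℂ, Complex.cos u ^2 = 1 - Complex.sin u ^2 from fun u => by
      have := Complex.sin_sq_add_cos_sq u; linear_combination this] <;> ring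

noncomputable def Kb (b : ℝ) (z : ℂ) : ℂ :=
  if b = 0 then 0 else (1 - Complex.cos ((b:ℂ)*z))/(b:ℂ)
noncomputable def Lb (b : ℝ) (z : ℂ) : ℂ :=
  if b = 0 then z else Complex.sin ((b:ℂ)*z)/(b:ℂ)

lemma hasDerivAt_mul_ofReal (z : ℂ) (t : ℝ) :
    HasDerivAt (fun s : ℝ => (s:ℂ)*z) z t := by
  simpa using (Complex.ofRealCLM.hasDerivAt (x := t)).mul_const z

lemma hKt (b : ℝ) (z : ℂ) (t : ℝ) :
    HasDerivAt (fun t:ℝ => Kb b ((t:ℂ)*z)) (z * Complex.sin ((b:ℂ)*((t:ℂ)*z))) t := by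
  by_cases hb : b = 0
  · simp [hb, Kb]
    exact hasDerivAt_const _ _
  · have hb' : (b:ℂ) ≠ 0 := Complex.ofReal_ne_zero.2 hb
    have h1 : HasDerivAt (fun t:ℝ => (b:ℂ)*((t:ℂ)*z)) ((b:ℂ)*z) t := by
      simpa using (hasDerivAt_mul_ofReal z t).const_mul (b:ℂ)
    have h2 : HasDerivAt (fun t:ℝ => Complex.cos ((b:ℂ)*((t:ℂ)*z)))
        (((b:ℂ)*z) • (-Complex.sin ((b:ℂ)*((t:ℂ)*z)))) t :=
      (Complex.hasDerivAt_cos _).scomp t h1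
    have h3 := ((hasDerivAt_const t (1:ℂ)).sub h2).div_const (b:ℂ)
    have : (fun t:ℝ => Kb b ((t:ℂ)*z))
        = fun t:ℝ => (1 - Complex.cos ((b:ℂ)*((t:ℂ)*z)))/(b:ℂ) := by
      funext s; simp [Kb, hb]
    rw [this]
    refine h3.congr_deriv ?_
    field_simp
    ring

lemma hLt (b : ℝ) (z : ℂ) (t : ℝ) :
    HasDerivAt (fun t:ℝ => Lb b ((t:ℂ)*z)) (z * Complex.cos ((b:ℂ)*((t:ℂ)*z))) t := by
  by_cases hb : b = 0
  · simp only [hb, Lb, if_pos rfl]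
    simpa [hb] using hasDerivAt_mul_ofReal z t
  · have hb' : (b:ℂ) ≠ 0 := Complex.ofReal_ne_zero.2 hb
    have h1 : HasDerivAt (fun t:ℝ => (b:ℂ)*((t:ℂ)*z)) ((b:ℂ)*z) t := by
      simpa using (hasDerivAt_mul_ofReal z t).const_mul (b:ℂ)
    have h2 : HasDerivAt (fun t:ℝ => Complex.sin ((b:ℂ)*((t:ℂ)*z)))
        (((b:ℂ)*z) • (Complex.cos ((b:ℂ)*((t:ℂ)*z)))) t :=
      (Complex.hasDerivAt_sin _).scomp t h1
    have h3 := h2.div_const (b:ℂ)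
    have : (fun t:ℝ => Lb b ((t:ℂ)*z))
        = fun t:ℝ => Complex.sin ((b:ℂ)*((t:ℂ)*z))/(b:ℂ) := by
      funext s; simp [Lb, hb]
    rw [this]
    refine h3.congr_deriv ?_
    field_simp
    ring

lemma hKz (b : ℝ) (z : ℂ) : HasDerivAt (Kb b) (Complex.sin ((b:ℂ)*z)) z := by
  by_cases hb : b = 0
  · have h0 : Kb b = fun _ : ℂ => (0:ℂ) := funext fun w => by simp [Kb, hb]
    rw [h0, hb]
    simpa using hasDerivAt_const z (0:ℂ)
  · have hb' : (b:ℂ) ≠ 0 := Complex.ofReal_ne_zero.2 hb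
    have h2 : HasDerivAt (fun w : ℂ => Complex.cos ((b:ℂ)*w))
        (-Complex.sin ((b:ℂ)*z) * (b:ℂ)) z :=
      by simpa using ((hasDerivAt_id z).const_mul (b:ℂ)).ccos
    have h3 := ((hasDerivAt_const z (1:ℂ)).sub h2).div_const (b:ℂ)
    have : Kb b = fun w : ℂ => (1 - Complex.cos ((b:ℂ)*w))/(b:ℂ) := by
      funext w; simp [Kb, hb]
    rw [this]
    refine h3.congr_deriv ?_
    field_simp
    ring
lemma hLz (b : ℝ) (z : ℂ) : HasDerivAt (Lb b) (Complex.cos ((b:ℂ)*z)) z := by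
  by_cases hb : b = 0
  · have h0 : Lb b = fun w : ℂ => w := funext fun w => by simp [Lb, hb]
    rw [h0, hb]
    exact (hasDerivAt_id z).congr_deriv (by simp)
  · have hb' : (b:ℂ) ≠ 0 := Complex.ofReal_ne_zero.2 hb
    have h2 : HasDerivAt (fun w : ℂ => Complex.sin ((b:ℂ)*w))
        (Complex.cos ((b:ℂ)*z) * (b:ℂ)) z :=
      by simpa using ((hasDerivAt_id z).const_mul (b:ℂ)).csin
    have h3 := h2.div_const (b:ℂ)
    have : Lb b = fun w : ℂ => Complex.sin ((b:ℂ)*w)/(b:ℂ) := by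
      funext w; simp [Lb, hb]
    rw [this]
    refine h3.congr_deriv ?_
    field_simp

noncomputable def IntVal (a : ℝ) (z : ℂ) : Fin 3 → ℂ :=
  ![-(Kb (a+1) z + Kb (a-1) z)/2, -(Lb (a-1) z - Lb (a+1) z)/2, -(Lb a z)]

noncomputable def Pvec (a : ℝ) (z : ℂ) (t : ℝ) : Fin 3 → ℂ :=
  ![-(Kb (a+1) ((t:ℂ)*z) + Kb (a-1) ((t:ℂ)*z))/2,
    -(Lb (a-1) ((t:ℂ)*z) - Lb (a+1) ((t:ℂ)*z))/2, -(Lb a ((t:ℂ)*z))]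

lemma sin_addone (a : ℝ) (w : ℂ) : Complex.sin (((a+1:ℝ):ℂ)*w)
    = Complex.sin ((a:ℂ)*w) * Complex.cos w + Complex.cos ((a:ℂ)*w) * Complex.sin w := by
  rw [show ((a+1:ℝ):ℂ)*w = (a:ℂ)*w + w by push_cast; ring, Complex.sin_add]
lemma sin_subone (a : ℝ) (w : ℂ) : Complex.sin (((a-1:ℝ):ℂ)*w)
    = Complex.sin ((a:ℂ)*w) * Complex.cos w - Complex.cos ((a:ℂ)*w) * Complex.sin w := by
  rw [show ((a-1:ℝ):ℂ)*w = (a:ℂ)*w - w by push_cast; ring, Complex.sin_sub]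
lemma cos_addone (a : ℝ) (w : ℂ) : Complex.cos (((a+1:ℝ):ℂ)*w)
    = Complex.cos ((a:ℂ)*w) * Complex.cos w - Complex.sin ((a:ℂ)*w) * Complex.sin w := by
  rw [show ((a+1:ℝ):ℂ)*w = (a:ℂ)*w + w by push_cast; ring, Complex.cos_add]
lemma cos_subone (a : ℝ) (w : ℂ) : Complex.cos (((a-1:ℝ):ℂ)*w)
    = Complex.cos ((a:ℂ)*w) * Complex.cos w + Complex.sin ((a:ℂ)*w) * Complex.sin w := by
  rw [show ((a-1:ℝ):ℂ)*w = (a:ℂ)*w - w by push_cast; ring, Complex.cos_sub]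

lemma hasDerivAt_Pvec (a : ℝ) (z : ℂ) (t : ℝ) :
    HasDerivAt (Pvec a z) (z • Hvec a ((t:ℂ)*z)) t := by
  rw [hasDerivAt_pi]
  intro i
  fin_cases i
  · have h := (((hKt (a+1) z t).add (hKt (a-1) z t)).div_const 2).neg
    convert h using 1
    · funext s; simp [Pvec]; ring
    · rw [sin_addone, sin_subone]; simp [Hvec]; ring
  · have h := (((hLt (a-1) z t).sub (hLt (a+1) z t)).div_const 2).neg
    convert h using 1
    · funext s; simp [Pvec]; ring
    · rw [cos_addone, cos_subone]; simp [Hvec]; ring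
  · have h := (hLt a z t).neg
    convert h using 1
    simp [Hvec]
    · funext s; simp [Pvec]
    · simp [Hvec]

lemma integral_cross (a : ℝ) (z : ℂ) :
    (∫ t in (0:ℝ)..1, z • crossProduct (spinN a ((t:ℂ)*z)) (circC' ((t:ℂ)*z))) = IntVal a z := by
  have h : (fun t : ℝ => z • crossProduct (spinN a ((t:ℂ)*z)) (circC' ((t:ℂ)*z)))
      = fun t : ℝ => z • Hvec a ((t:ℂ)*z) := by
    funext t; rw [cross_eq]
  rw [h]
  have hcont : Continuous (fun t : ℝ => z • Hvec a ((t:ℂ)*z)) := by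
    refine Continuous.const_smul (g := fun t : ℝ => Hvec a ((t:ℂ)*z)) ?_ z
    apply continuous_pi
    intro i
    fin_cases i <;> simp [Hvec] <;> fun_prop
  rw [intervalIntegral.integral_eq_sub_of_hasDerivAt
    (fun t _ => hasDerivAt_Pvec a z t) (hcont.intervalIntegrable 0 1)]
  have h1 : Pvec a z 1 = IntVal a z := by
    funext i; fin_cases i <;> simp [Pvec, IntVal]
  have h0 : Pvec a z 0 = 0 := by
    funext i; fin_cases i <;> simp [Pvec, Kb, Lb] <;> split <;> simp
  rw [h1, h0, sub_zero]

noncomputable def gd (a : ℝ) (z : ℂ) : Fin 3 → ℂ :=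
  ![-Complex.sin z + Complex.I * (Complex.sin ((a:ℂ)*z) * Complex.cos z),
    Complex.cos z + Complex.I * (Complex.sin ((a:ℂ)*z) * Complex.sin z),
    Complex.I * Complex.cos ((a:ℂ)*z)]

lemma hasDerivAt_G (a : ℝ) (z : ℂ) (i : Fin 3) :
    HasDerivAt (fun w => circC w i - Complex.I * IntVal a w i) (gd a z i) z := by
  fin_cases i
  · have e : (fun w => circC w (0:Fin 3) - Complex.I * IntVal a w (0:Fin 3))
        = fun w => Complex.cos w - Complex.I * (-(Kb (a+1) w + Kb (a-1) w)/2) := by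
      funext w; simp [circC, IntVal]
    show HasDerivAt (fun w => circC w (0:Fin 3) - Complex.I * IntVal a w (0:Fin 3)) (gd a z 0) z
    rw [e]
    have h := (Complex.hasDerivAt_cos z).sub
      ((((hKz (a+1) z).add (hKz (a-1) z)).neg.div_const 2).const_mul Complex.I)
    refine h.congr_deriv ?_
    rw [show gd a z 0 = -Complex.sin z + Complex.I * (Complex.sin ((a:ℂ)*z) * Complex.cos z) by
      simp [gd]]
    rw [sin_addone, sin_subone]; ring
  · have e : (fun w => circC w (1:Fin 3) - Complex.I * IntVal a w (1:Fin 3))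
        = fun w => Complex.sin w - Complex.I * (-(Lb (a-1) w - Lb (a+1) w)/2) := by
      funext w; simp [circC, IntVal]
    show HasDerivAt (fun w => circC w (1:Fin 3) - Complex.I * IntVal a w (1:Fin 3)) (gd a z 1) z
    rw [e]
    have h := (Complex.hasDerivAt_sin z).sub
      ((((hLz (a-1) z).sub (hLz (a+1) z)).neg.div_const 2).const_mul Complex.I)
    refine h.congr_deriv ?_
    rw [show gd a z 1 = Complex.cos z + Complex.I * (Complex.sin ((a:ℂ)*z) * Complex.sin z) by
      simp [gd]]
    rw [cos_addone, cos_subone]; ring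
  · have e : (fun w => circC w (2:Fin 3) - Complex.I * IntVal a w (2:Fin 3))
        = fun w => 0 - Complex.I * (-(Lb a w)) := by
      funext w; simp [circC, IntVal]
    show HasDerivAt (fun w => circC w (2:Fin 3) - Complex.I * IntVal a w (2:Fin 3)) (gd a z 2) z
    rw [e]
    have h := (hasDerivAt_const z (0:ℂ)).sub (((hLz a z).neg).const_mul Complex.I)
    refine h.congr_deriv ?_
    rw [show gd a z 2 = Complex.I * Complex.cos ((a:ℂ)*z) by simp [gd]]
    ring

lemma csin (u v : ℝ) : Complex.sin ((u:ℂ) + (v:ℂ)*Complex.I)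
    = ((Real.sin u * Real.cosh v : ℝ) : ℂ) + ((Real.cos u * Real.sinh v : ℝ) : ℂ) * Complex.I := by
  rw [Complex.sin_add, Complex.cos_mul_I, Complex.sin_mul_I]
  push_cast
  ring
lemma ccos (u v : ℝ) : Complex.cos ((u:ℂ) + (v:ℂ)*Complex.I)
    = ((Real.cos u * Real.cosh v : ℝ) : ℂ) - ((Real.sin u * Real.sinh v : ℝ) : ℂ) * Complex.I := by
  rw [Complex.cos_add, Complex.cos_mul_I, Complex.sin_mul_I]
  push_cast
  ring

theorem stmt2 (a : ℝ) (ha : 0 < a) (x y : ℝ) :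
    ((deriv (fun s : ℝ => bentF a s y 0) x) ^ 2
      + (deriv (fun s : ℝ => bentF a s y 1) x) ^ 2
      + (deriv (fun s : ℝ => bentF a s y 2) x) ^ 2
      = (Real.cosh y * Real.cosh (a * y) - Real.sin (a * x) * Real.sinh y) ^ 2)
    ∧ ((deriv (fun s : ℝ => bentF a x s 0) y) ^ 2
      + (deriv (fun s : ℝ => bentF a x s 1) y) ^ 2
      + (deriv (fun s : ℝ => bentF a x s 2) y) ^ 2
      = (Real.cosh y * Real.cosh (a * y) - Real.sin (a * x) * Real.sinh y) ^ 2) := by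
  have hb : ∀ (i : Fin 3) (s t : ℝ), bentF a s t i
      = (circC ((s:ℂ) + (t:ℂ)*Complex.I) i - Complex.I * IntVal a ((s:ℂ)+(t:ℂ)*Complex.I) i).re := by
    intro i s t
    simp only [bentF, integral_cross a ((s:ℂ) + (t:ℂ)*Complex.I), Pi.sub_apply, Pi.smul_apply,
      smul_eq_mul]
  set z : ℂ := (x:ℂ) + (y:ℂ)*Complex.I with hzdef
  -- x-direction
  have hlinex : HasDerivAt (fun s:ℝ => (s:ℂ) + (y:ℂ)*Complex.I) 1 x := by
    simpa using (Complex.ofRealCLM.hasDerivAt (x := x)).add_const ((y:ℂ)*Complex.I)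
  have hliney : HasDerivAt (fun s:ℝ => (x:ℂ) + (s:ℂ)*Complex.I) Complex.I y := by
    simpa using ((Complex.ofRealCLM.hasDerivAt (x := y)).mul_const Complex.I).const_add (x:ℂ)
  have hdx : ∀ i : Fin 3, deriv (fun s : ℝ => bentF a s y i) x = (gd a z i).re := by
    intro i
    have h1 : HasDerivAt (fun s:ℝ => circC ((s:ℂ)+(y:ℂ)*Complex.I) i
        - Complex.I * IntVal a ((s:ℂ)+(y:ℂ)*Complex.I) i) (gd a z i) x := by
      have := (hasDerivAt_G a z i).scomp x hlinex
      simp only [one_smul] at this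
      exact this
    have h2 : HasDerivAt (fun s:ℝ => bentF a s y i) ((gd a z i).re) x := by
      have h3 := Complex.reCLM.hasFDerivAt.comp_hasDerivAt x h1
      have e : (fun s:ℝ => bentF a s y i) = fun s:ℝ => (circC ((s:ℂ)+(y:ℂ)*Complex.I) i
          - Complex.I * IntVal a ((s:ℂ)+(y:ℂ)*Complex.I) i).re := by
        funext s; exact hb i s y
      rw [e]; exact h3
    exact h2.deriv
  have hdy : ∀ i : Fin 3, deriv (fun s : ℝ => bentF a x s i) y = (Complex.I * gd a z i).re := by
    intro i
    have h1 : HasDerivAt (fun s:ℝ => circC ((x:ℂ)+(s:ℂ)*Complex.I) i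
        - Complex.I * IntVal a ((x:ℂ)+(s:ℂ)*Complex.I) i) (Complex.I * gd a z i) y := by
      have := (hasDerivAt_G a z i).scomp y hliney
      simp only [smul_eq_mul] at this
      exact this
    have h2 : HasDerivAt (fun s:ℝ => bentF a x s i) ((Complex.I * gd a z i).re) y := by
      have h3 := Complex.reCLM.hasFDerivAt.comp_hasDerivAt y h1
      have e : (fun s:ℝ => bentF a x s i) = fun s:ℝ => (circC ((x:ℂ)+(s:ℂ)*Complex.I) i
          - Complex.I * IntVal a ((x:ℂ)+(s:ℂ)*Complex.I) i).re := by
        funext s; exact hb i x s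
      rw [e]; exact h3
    exact h2.deriv
  have e1 : Complex.sin z = ((Real.sin x * Real.cosh y : ℝ) : ℂ)
      + ((Real.cos x * Real.sinh y : ℝ) : ℂ) * Complex.I := csin x y
  have e2 : Complex.cos z = ((Real.cos x * Real.cosh y : ℝ) : ℂ)
      - ((Real.sin x * Real.sinh y : ℝ) : ℂ) * Complex.I := ccos x y
  have e3 : Complex.sin ((a:ℂ)*z) = ((Real.sin (a*x) * Real.cosh (a*y) : ℝ) : ℂ)
      + ((Real.cos (a*x) * Real.sinh (a*y) : ℝ) : ℂ) * Complex.I := by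
    rw [show (a:ℂ)*z = ((a*x:ℝ):ℂ) + ((a*y:ℝ):ℂ)*Complex.I by rw [hzdef]; push_cast; ring]
    exact csin _ _
  have e4 : Complex.cos ((a:ℂ)*z) = ((Real.cos (a*x) * Real.cosh (a*y) : ℝ) : ℂ)
      - ((Real.sin (a*x) * Real.sinh (a*y) : ℝ) : ℂ) * Complex.I := by
    rw [show (a:ℂ)*z = ((a*x:ℝ):ℂ) + ((a*y:ℝ):ℂ)*Complex.I by rw [hzdef]; push_cast; ring]
    exact ccos _ _
  have h1 : Real.sin x ^ 2 + Real.cos x ^ 2 = 1 := Real.sin_sq_add_cos_sq x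
  have h2 : Real.sin (a*x) ^ 2 + Real.cos (a*x) ^ 2 = 1 := Real.sin_sq_add_cos_sq (a*x)
  have h3 : Real.cosh y ^ 2 - Real.sinh y ^ 2 = 1 := Real.cosh_sq_sub_sinh_sq y
  have h4 : Real.cosh (a*y) ^ 2 - Real.sinh (a*y) ^ 2 = 1 := Real.cosh_sq_sub_sinh_sq (a*y)
  set S := Real.sin x; set C := Real.cos x
  set Sa := Real.sin (a*x); set Ca := Real.cos (a*x)
  set sh := Real.sinh y; set ch := Real.cosh y
  set sha := Real.sinh (a*y); set cha := Real.cosh (a*y)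
  constructor
  · rw [hdx 0, hdx 1, hdx 2]
    simp only [gd, Matrix.cons_val_zero, Matrix.cons_val_one, Matrix.head_cons,
      Matrix.cons_val_two, Matrix.tail_cons, e1, e2, e3, e4]
    simp only [Complex.add_re, Complex.sub_re, Complex.neg_re, Complex.mul_re, Complex.mul_im,
      Complex.add_im, Complex.sub_im, Complex.neg_im, Complex.I_re, Complex.I_im,
      Complex.ofReal_re, Complex.ofReal_im]
    ring_nf
    linear_combination (ch^2 + Ca^2*ch^2*sha^2 - 2*Sa*sh*ch*cha + Sa^2*sh^2*cha^2) * h1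
      + (sha^2 - sh^2 + sh^2*cha^2) * h2 + (1 - cha^2 + Ca^2*sha^2) * h3
      + (-1 - Ca^2*sh^2) * h4
  · rw [hdy 0, hdy 1, hdy 2]
    simp only [gd, Matrix.cons_val_zero, Matrix.cons_val_one, Matrix.head_cons,
      Matrix.cons_val_two, Matrix.tail_cons, e1, e2, e3, e4]
    simp only [Complex.add_re, Complex.sub_re, Complex.neg_re, Complex.mul_re, Complex.mul_im,
      Complex.add_im, Complex.sub_im, Complex.neg_im, Complex.I_re, Complex.I_im,
      Complex.ofReal_re, Complex.ofReal_im]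
    ring_nf
    linear_combination (sh^2 + Ca^2*sh^2*sha^2 - 2*Sa*sh*ch*cha + Sa^2*ch^2*cha^2) * h1
      + (ch^2*cha^2 - sh^2) * h2 + (-(Ca^2*cha^2)) * h3 + (-(Ca^2*sh^2)) * h4
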